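/- If f_i: ℝ_{≥0}^N → ℝ are quasi-positive, continuously differentiable, satisfy ∑_i f_i(u) ≤ 0 for all u ≥ 0, and satisfy ∂f_i/∂u_i(u) ≥ -C(1+|u|²) for all u ≥ 0 and all i, then there is a constant C' with ∑_i f_i(u) log u_i ≤ C'(1+|u|³) for all u with strictly positive entries. -/

import Mathlib

/-!
By the mean value theorem along the `i`-th coordinate, starting on the face `u i = 0` where
quasi-positivity gives `f i ≥ 0`, the bound on `∂f_i/∂u_i` yields `f i u ≥ -C (1 + |u|²) u i`.
With `M = 1 + |u|`, split `log (u i) = (log (u i) - log M) + log M`: the `log M` part is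
killed by `∑ i, f i u ≤ 0`, and each remaining term is at most
`C (1 + |u|²) · u i log (M / u i) ≤ C (1 + |u|²) M`.
-/

open Real Set

namespace EuclideanSpace

theorem norm_le_norm_of_abs_apply_le {ι : Type*} [Fintype ι] {v u : EuclideanSpace ℝ ι}
    (h : ∀ j, |v j| ≤ |u j|) : ‖v‖ ≤ ‖u‖ := by
  simp only [norm_eq, Real.norm_eq_abs]
  exact sqrt_le_sqrt <| Finset.sum_le_sum fun j _ => pow_le_pow_left₀ (abs_nonneg _) (h j) 2

variable {ι : Type*} [DecidableEq ι]

noncomputable def replaceCoord (u : EuclideanSpace ℝ ι) (i : ι) (t : ℝ) : EuclideanSpace ℝ ι :=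
  u + (t - u i) • single i 1

theorem replaceCoord_apply (u : EuclideanSpace ℝ ι) (i j : ι) (t : ℝ) :
    replaceCoord u i t j = if j = i then t else u j := by
  by_cases h : j = i
  · subst h; simp [replaceCoord]
  · simp [replaceCoord, h]

@[simp]
theorem replaceCoord_self (u : EuclideanSpace ℝ ι) (i : ι) : replaceCoord u i (u i) = u := by
  simp [replaceCoord]

variable [Fintype ι]

theorem hasDerivAt_replaceCoord (u : EuclideanSpace ℝ ι) (i : ι) (t : ℝ) :
    HasDerivAt (replaceCoord u i) (single i 1) t := by
  have h := (((hasDerivAt_id t).sub_const (u i)).smul_const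
    (single i (1 : ℝ))).const_add u
  rwa [one_smul] at h

theorem norm_replaceCoord_le (u : EuclideanSpace ℝ ι) (i : ι) {t : ℝ}
    (ht : |t| ≤ |u i|) : ‖replaceCoord u i t‖ ≤ ‖u‖ :=
  norm_le_norm_of_abs_apply_le fun j => by
    rw [replaceCoord_apply]
    split_ifs with h
    · exact h ▸ ht
    · exact le_rfl

end EuclideanSpace

open EuclideanSpace

section

variable {ι : Type*} [Fintype ι] [DecidableEq ι]

theorem neg_mul_le_of_le_fderiv_single {g : EuclideanSpace ℝ ι → ℝ} (hg : Differentiable ℝ g)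
    {K : ℝ} {u : EuclideanSpace ℝ ι} {i : ι} (hui : 0 ≤ u i) (h0 : 0 ≤ g (replaceCoord u i 0))
    (hder : ∀ t ∈ Icc 0 (u i), -K ≤ fderiv ℝ g (replaceCoord u i t) (single i 1)) :
    -(K * u i) ≤ g u := by
  set φ : ℝ → ℝ := fun t => g (replaceCoord u i t)
  have hφ : ∀ t, HasDerivAt φ (fderiv ℝ g (replaceCoord u i t) (single i 1)) t := fun t =>
    (hg _).hasFDerivAt.comp_hasDerivAt t (hasDerivAt_replaceCoord u i t)
  have hφd : Differentiable ℝ φ := fun t => (hφ t).differentiableAt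
  have hmvt := (convex_Icc 0 (u i)).mul_sub_le_image_sub_of_le_deriv hφd.continuous.continuousOn
    hφd.differentiableOn (fun t ht => (hφ t).deriv ▸ hder t (interior_subset ht))
    0 ⟨le_rfl, hui⟩ (u i) ⟨hui, le_rfl⟩ hui
  simp only [φ, replaceCoord_self, sub_zero] at hmvt
  linarith

theorem neg_mul_le_of_quasiPositive {g : EuclideanSpace ℝ ι → ℝ} (hg : Differentiable ℝ g)
    {C : ℝ} (hC : 0 ≤ C) {i : ι}
    (hqp : ∀ u : EuclideanSpace ℝ ι, (∀ j, 0 ≤ u j) → u i = 0 → 0 ≤ g u)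
    (hder : ∀ u : EuclideanSpace ℝ ι, (∀ j, 0 ≤ u j) →
      -C * (1 + ‖u‖ ^ 2) ≤ fderiv ℝ g u (single i 1))
    {u : EuclideanSpace ℝ ι} (hu : ∀ j, 0 ≤ u j) :
    -(C * (1 + ‖u‖ ^ 2) * u i) ≤ g u := by
  have hnonneg : ∀ t ∈ Icc 0 (u i), ∀ j, 0 ≤ replaceCoord u i t j := fun t ht j => by
    rw [replaceCoord_apply]
    split_ifs
    exacts [ht.1, hu j]
  refine neg_mul_le_of_le_fderiv_single hg (hu i)
    (hqp _ (hnonneg 0 ⟨le_rfl, hu i⟩) (by simp [replaceCoord_apply])) fun t ht => ?_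
  have hnorm : ‖replaceCoord u i t‖ ≤ ‖u‖ := norm_replaceCoord_le u i <| by
    rw [abs_of_nonneg ht.1, abs_of_nonneg (hu i)]
    exact ht.2
  calc -(C * (1 + ‖u‖ ^ 2)) ≤ -C * (1 + ‖replaceCoord u i t‖ ^ 2) := by
        rw [neg_mul, neg_le_neg_iff]
        gcongr
    _ ≤ _ := hder _ (hnonneg t ht)

end

theorem mul_log_sub_log_le {x M : ℝ} (hx : 0 < x) (hM : 0 < M) : x * (log M - log x) ≤ M := by
  have hlog := log_le_sub_one_of_pos (div_pos hM hx)
  rw [log_div hM.ne' hx.ne'] at hlog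
  calc x * (log M - log x) ≤ x * (M / x - 1) := mul_le_mul_of_nonneg_left hlog hx.le
    _ = M - x := by field_simp
    _ ≤ M := by linarith

theorem sum_mul_log_le_of_neg_mul_le {ι : Type*} (s : Finset ι) {x y : ι → ℝ} {K M : ℝ}
    (hK : 0 ≤ K) (hM : 1 ≤ M) (hx : ∀ i ∈ s, 0 < x i) (hxM : ∀ i ∈ s, x i ≤ M)
    (hy : ∀ i ∈ s, -(K * x i) ≤ y i) (hsum : ∑ i ∈ s, y i ≤ 0) :
    ∑ i ∈ s, y i * log (x i) ≤ s.card * K * M := by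
  have hterm : ∀ i ∈ s, y i * (log (x i) - log M) ≤ K * M := fun i hi => by
    have hlog : log (x i) - log M ≤ 0 := sub_nonpos.2 (log_le_log (hx i hi) (hxM i hi))
    calc y i * (log (x i) - log M) ≤ -(K * x i) * (log (x i) - log M) :=
          mul_le_mul_of_nonpos_right (hy i hi) hlog
      _ = K * (x i * (log M - log (x i))) := by ring
      _ ≤ K * M := mul_le_mul_of_nonneg_left (mul_log_sub_log_le (hx i hi) (by linarith)) hK
  calc ∑ i ∈ s, y i * log (x i)
        = ∑ i ∈ s, y i * (log (x i) - log M) + (∑ i ∈ s, y i) * log M := by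
          rw [Finset.sum_mul, ← Finset.sum_add_distrib]
          exact Finset.sum_congr rfl fun i _ => by ring
    _ ≤ ∑ _i ∈ s, K * M + 0 :=
          add_le_add (Finset.sum_le_sum hterm)
            (mul_nonpos_of_nonpos_of_nonneg hsum (log_nonneg hM))
    _ = s.card * K * M := by simp [mul_assoc]

theorem one_add_sq_mul_one_add_le {x : ℝ} (hx : 0 ≤ x) :
    (1 + x ^ 2) * (1 + x) ≤ 2 * (1 + x ^ 3) := by
  nlinarith [mul_nonneg (sq_nonneg (x - 1)) (by linarith : 0 ≤ 1 + x)]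

theorem stmt1 (N : ℕ) (f : Fin N → EuclideanSpace ℝ (Fin N) → ℝ) (C : ℝ) (hC : 0 < C)
    (hreg : ∀ i, ContDiff ℝ 1 (f i))
    (hqp : ∀ i, ∀ u : EuclideanSpace ℝ (Fin N), (∀ j, 0 ≤ u j) → u i = 0 → 0 ≤ f i u)
    (hmd : ∀ u : EuclideanSpace ℝ (Fin N), (∀ j, 0 ≤ u j) → ∑ i, f i u ≤ 0)
    (hder : ∀ i, ∀ u : EuclideanSpace ℝ (Fin N), (∀ j, 0 ≤ u j) →
      -C * (1 + ‖u‖ ^ 2) ≤ fderiv ℝ (f i) u (EuclideanSpace.single i 1)) :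
    ∃ C' : ℝ, 0 < C' ∧ ∀ u : EuclideanSpace ℝ (Fin N), (∀ j, 0 < u j) →
      ∑ i, f i u * Real.log (u i) ≤ C' * (1 + ‖u‖ ^ 3) := by
  refine ⟨2 * (N + 1) * C, by positivity, fun u hu => ?_⟩
  have hu₀ : ∀ j, 0 ≤ u j := fun j => (hu j).le
  have hlow : ∀ i, -(C * (1 + ‖u‖ ^ 2) * u i) ≤ f i u := fun i =>
    neg_mul_le_of_quasiPositive ((hreg i).differentiable one_ne_zero) hC.le (hqp i) (hder i) hu₀
  have hle : ∀ i, u i ≤ 1 + ‖u‖ := fun i => by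
    linarith [(le_abs_self (u i)).trans (PiLp.norm_apply_le u i)]
  calc ∑ i, f i u * log (u i) ≤ N * (C * (1 + ‖u‖ ^ 2)) * (1 + ‖u‖) := by
        simpa using sum_mul_log_le_of_neg_mul_le Finset.univ (by positivity)
          (by linarith [norm_nonneg u]) (fun i _ => hu i) (fun i _ => hle i) (fun i _ => hlow i)
          (hmd u hu₀)
    _ = N * C * ((1 + ‖u‖ ^ 2) * (1 + ‖u‖)) := by ring
    _ ≤ (N + 1) * C * (2 * (1 + ‖u‖ ^ 3)) := by
        gcongr ?_ * _ * ?_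
        exacts [by linarith, one_add_sq_mul_one_add_le (norm_nonneg u)]
    _ = 2 * (N + 1) * C * (1 + ‖u‖ ^ 3) := by ring
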